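/- arXiv:math/0506508 — 2 statements merged into one kernel-verified Lean document; each statement's English description precedes it below -/
import Mathlib

section
/- Define k₁ : ℝ₊ → ℝ by k₁(w) = 5 + 1/(1+w²), and let k₂ : (5,∞) → (5/2,∞) be the inverse of P(z) = 2z³ − 9z² + 12z restricted to (5/2,∞) (so P(k₂(y)) = y). Then the composition T = k₂ ∘ k₁ maps [5/2, ∞) into itself and is a contraction: for all w ≥ 5/2, |T'(w)| ≤ (|k₁'(5/2)| / P'(5/2)) = (5/(1+25/4)²)·(2/9) < 1. Consequently T has a unique fixed point in [5/2,∞), and every iterate sequence w_{k+1} = T(w_k) with w₀ ≥ 5/2 converges to it. -/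
/-!
`k₂` is the inverse of the increasing branch of `P` on `[5/2, ∞)`; being monotone with open
image it is continuous, so the inverse function theorem gives `k₂' = 1 / P' ∘ k₂`. By the chain rule
`T' = k₁' / P'(T)`, and on `[5/2, ∞)` we have `|k₁'| ≤ |k₁'(5/2)|` while `P'(z) = 6(z-1)(z-2) ≥ 9/2`.
Hence `T` is a contraction of the complete set `[5/2, ∞)` (mean value theorem), and Banach's fixed
point theorem gives the unique fixed point and the convergence of every orbit.
-/

open Filter Topology Set Function
open scoped NNReal

section FixedPoint

variable {α : Type*} [MetricSpace α] {f : α → α} {s : Set α} {K : ℝ≥0}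

theorem LipschitzOnWith.eq_of_isFixedPt (hf : LipschitzOnWith K f s) (hK : K < 1) {x y : α}
    (hx : x ∈ s) (hy : y ∈ s) (hfx : IsFixedPt f x) (hfy : IsFixedPt f y) : x = y := by
  have h := hf.dist_le_mul x hx y hy
  rw [hfx.eq, hfy.eq] at h
  have hK' : (K : ℝ) < 1 := hK
  exact dist_le_zero.mp (by nlinarith [dist_nonneg (x := x) (y := y)])

theorem LipschitzOnWith.exists_isFixedPt (hf : LipschitzOnWith K f s) (hK : K < 1)
    (hsc : IsComplete s) (hsf : MapsTo f s s) (hs : s.Nonempty) : ∃ x ∈ s, IsFixedPt f x := by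
  obtain ⟨x₀, hx₀⟩ := hs
  obtain ⟨x, hx, hfx, -⟩ :=
    ContractingWith.exists_fixedPoint' hsc hsf ⟨hK, hf.mapsToRestrict hsf⟩ hx₀ (edist_ne_top _ _)
  exact ⟨x, hx, hfx⟩

theorem LipschitzOnWith.tendsto_of_isFixedPt (hf : LipschitzOnWith K f s) (hK : K < 1)
    (hsc : IsComplete s) (hsf : MapsTo f s s) {x : α} (hx : x ∈ s) (hfx : IsFixedPt f x)
    {u : ℕ → α} (hu₀ : u 0 ∈ s) (hu : ∀ n, u (n + 1) = f (u n)) : Tendsto u atTop (𝓝 x) := by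
  obtain ⟨y, hy, hfy, hlim, -⟩ :=
    ContractingWith.exists_fixedPoint' hsc hsf ⟨hK, hf.mapsToRestrict hsf⟩ hu₀ (edist_ne_top _ _)
  have hu_iter : u = fun n ↦ f^[n] (u 0) := by
    funext n
    induction n with
    | zero => rfl
    | succ n ih => rw [hu, ih, iterate_succ_apply']
  rwa [hu_iter, hf.eq_of_isFixedPt hK hx hy hfx hfy]

end FixedPoint

section OrderInverse

variable {α β : Type*} [LinearOrder α] [TopologicalSpace α] [OrderTopology α]
  [LinearOrder β] [TopologicalSpace β] [OrderTopology β] [DenselyOrdered β]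

theorem StrictMonoOn.continuousAt_of_rightInverse {f : β → α} {g : α → β} {s : Set α} {t : Set β}
    (hf : StrictMonoOn f t) (hft : MapsTo f t s) (hgs : MapsTo g s t)
    (hfg : ∀ y ∈ s, f (g y) = y) (ht : IsOpen t) {y : α} (hs : s ∈ 𝓝 y) :
    ContinuousAt g y := by
  -- `g` is monotone and its image covers the open set `t`, so it has no jumps.
  have hg_mono : MonotoneOn g s := by
    intro a ha b hb hab
    by_contra! hlt
    have := hf (hgs hb) (hgs ha) hlt
    rw [hfg a ha, hfg b hb] at this
    exact hab.not_gt this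
  have ht_sub : t ⊆ g '' s := fun z hz ↦
    ⟨f z, hft hz, hf.injOn (hgs (hft hz)) hz (hfg _ (hft hz))⟩
  exact continuousAt_of_monotoneOn_of_image_mem_nhds hg_mono hs
    (mem_of_superset (ht.mem_nhds (hgs (mem_of_mem_nhds hs))) ht_sub)

end OrderInverse

/-- The polynomial `P` of the statement. -/
def cubic (z : ℝ) : ℝ := 2 * z ^ 3 - 9 * z ^ 2 + 12 * z

theorem hasDerivAt_cubic (z : ℝ) : HasDerivAt cubic (6 * (z - 1) * (z - 2)) z := by
  have h := (((hasDerivAt_pow 3 z).const_mul 2).sub ((hasDerivAt_pow 2 z).const_mul 9)).add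
    ((hasDerivAt_id z).const_mul 12)
  exact h.congr_deriv (by push_cast; ring)

theorem strictMonoOn_cubic : StrictMonoOn cubic (Ici (5 / 2)) := by
  refine strictMonoOn_of_deriv_pos (convex_Ici _)
    (fun z _ ↦ (hasDerivAt_cubic z).continuousAt.continuousWithinAt) fun z hz ↦ ?_
  rw [interior_Ici, mem_Ioi] at hz
  rw [(hasDerivAt_cubic z).deriv]
  exact mul_pos (mul_pos (by norm_num) (by linarith)) (by linarith)

theorem five_lt_cubic {z : ℝ} (hz : 5 / 2 < z) : 5 < cubic z := by
  have h := strictMonoOn_cubic self_mem_Ici hz.le hz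
  norm_num [cubic] at h ⊢
  linarith

theorem hasDerivAt_rightInverse_cubic {k₂ : ℝ → ℝ}
    (hk₂ : ∀ y, 5 < y → 5 / 2 < k₂ y ∧ cubic (k₂ y) = y) {y : ℝ} (hy : 5 < y) :
    HasDerivAt k₂ (6 * (k₂ y - 1) * (k₂ y - 2))⁻¹ y := by
  have hcont : ContinuousAt k₂ y :=
    (strictMonoOn_cubic.mono Ioi_subset_Ici_self).continuousAt_of_rightInverse
      (fun z hz ↦ five_lt_cubic hz) (fun y hy ↦ (hk₂ y hy).1) (fun y hy ↦ (hk₂ y hy).2)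
      isOpen_Ioi (Ioi_mem_nhds hy)
  have hz := (hk₂ y hy).1
  refine HasDerivAt.of_local_left_inverse hcont (hasDerivAt_cubic _) ?_ ?_
  · exact (mul_pos (mul_pos (by norm_num) (by linarith)) (by linarith)).ne'
  · filter_upwards [Ioi_mem_nhds hy] with y' hy' using (hk₂ y' hy').2

theorem hasDerivAt_five_add_one_div_one_add_sq (w : ℝ) :
    HasDerivAt (fun w : ℝ ↦ 5 + 1 / (1 + w ^ 2)) (-(2 * w) / (1 + w ^ 2) ^ 2) w := by
  have h := (((hasDerivAt_pow 2 w).const_add 1).inv (by positivity)).const_add 5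
  simp only [one_div]
  exact h.congr_deriv (by push_cast; ring)

theorem five_lt_five_add_one_div_one_add_sq (w : ℝ) : 5 < 5 + 1 / (1 + w ^ 2) := by
  have : 0 < 1 / (1 + w ^ 2) := by positivity
  linarith

theorem two_mul_div_one_add_sq_sq_le {w : ℝ} (hw : 5 / 2 ≤ w) :
    2 * w / (1 + w ^ 2) ^ 2 ≤ 5 / (1 + 25 / 4) ^ 2 := by
  rw [div_le_div_iff₀ (by positivity) (by norm_num)]
  nlinarith [sq_nonneg (w - 5 / 2), sq_nonneg w, sq_nonneg (w ^ 2 - 25 / 4)]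

section Composition

variable {k₂ : ℝ → ℝ}

theorem hasDerivAt_rightInverse_cubic_comp
    (hk₂ : ∀ y, 5 < y → 5 / 2 < k₂ y ∧ cubic (k₂ y) = y) (w : ℝ) :
    HasDerivAt (fun w ↦ k₂ (5 + 1 / (1 + w ^ 2)))
      ((6 * (k₂ (5 + 1 / (1 + w ^ 2)) - 1) * (k₂ (5 + 1 / (1 + w ^ 2)) - 2))⁻¹ *
        (-(2 * w) / (1 + w ^ 2) ^ 2)) w :=
  (hasDerivAt_rightInverse_cubic hk₂ (five_lt_five_add_one_div_one_add_sq w)).comp w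
    (hasDerivAt_five_add_one_div_one_add_sq w)

theorem abs_deriv_rightInverse_cubic_comp_le
    (hk₂ : ∀ y, 5 < y → 5 / 2 < k₂ y ∧ cubic (k₂ y) = y) {w : ℝ} (hw : 5 / 2 ≤ w) :
    |deriv (fun w ↦ k₂ (5 + 1 / (1 + w ^ 2))) w| ≤ 5 / (1 + 25 / 4) ^ 2 * (2 / 9) := by
  set z := k₂ (5 + 1 / (1 + w ^ 2))
  have hz : 5 / 2 < z := (hk₂ _ (five_lt_five_add_one_div_one_add_sq w)).1
  have hP' : 9 / 2 ≤ 6 * (z - 1) * (z - 2) := by nlinarith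
  rw [(hasDerivAt_rightInverse_cubic_comp hk₂ w).deriv, abs_mul, abs_div, abs_neg, abs_inv,
    abs_of_pos (by linarith : 0 < 6 * (z - 1) * (z - 2)), abs_of_pos (by linarith : 0 < 2 * w),
    abs_of_pos (by positivity : (0 : ℝ) < (1 + w ^ 2) ^ 2), mul_comm]
  exact mul_le_mul (two_mul_div_one_add_sq_sq_le hw)
    ((inv_le_comm₀ (by linarith) (by norm_num)).mpr (by linarith)) (by positivity) (by positivity)

end Composition

theorem stmt_13 (P : ℝ → ℝ) (hP : ∀ z, P z = 2*z^3 - 9*z^2 + 12*z)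
    (k₁ : ℝ → ℝ) (hk₁ : ∀ w, k₁ w = 5 + 1/(1 + w^2))
    (k₂ : ℝ → ℝ) (hk₂ : ∀ y, 5 < y → 5/2 < k₂ y ∧ P (k₂ y) = y)
    (T : ℝ → ℝ) (hT : ∀ w, T w = k₂ (k₁ w)) :
    (∀ w : ℝ, 5/2 ≤ w → 5/2 ≤ T w) ∧
    (∀ w : ℝ, 5/2 ≤ w →
      |deriv T w| ≤ (5 / (1 + 25/4)^2) * (2/9) ∧ (5 / (1 + 25/4)^2) * (2/9) < 1) ∧
    (∃! wbar : ℝ, wbar ∈ Set.Ici (5/2 : ℝ) ∧ T wbar = wbar) ∧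
    (∀ wbar : ℝ, wbar ∈ Set.Ici (5/2 : ℝ) → T wbar = wbar →
      ∀ w : ℕ → ℝ, 5/2 ≤ w 0 → (∀ k, w (k+1) = T (w k)) →
        Tendsto w atTop (𝓝 wbar)) := by
  obtain rfl : P = cubic := funext hP
  have hTe : T = fun w ↦ k₂ (5 + 1 / (1 + w ^ 2)) := funext fun w ↦ by rw [hT, hk₁]
  have hmaps : MapsTo T (Ici (5 / 2)) (Ici (5 / 2)) := fun w _ ↦
    hTe ▸ (hk₂ _ (five_lt_five_add_one_div_one_add_sq w)).1.le
  have hderiv : ∀ w, 5 / 2 ≤ w → |deriv T w| ≤ 5 / (1 + 25 / 4) ^ 2 * (2 / 9) :=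
    hTe ▸ fun w hw ↦ abs_deriv_rightInverse_cubic_comp_le hk₂ hw
  have hdiff : Differentiable ℝ T :=
    hTe ▸ fun w ↦ (hasDerivAt_rightInverse_cubic_comp hk₂ w).differentiableAt
  have hK : (5 / (1 + 25 / 4) ^ 2 * (2 / 9) : ℝ).toNNReal < 1 :=
    Real.toNNReal_lt_one.mpr (by norm_num)
  have hlip : LipschitzOnWith (5 / (1 + 25 / 4) ^ 2 * (2 / 9) : ℝ).toNNReal T (Ici (5 / 2)) :=
    (convex_Ici _).lipschitzOnWith_of_nnnorm_deriv_le (fun w _ ↦ hdiff w)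
      fun w hw ↦ (Real.le_toNNReal_iff_coe_le (by positivity)).mpr (hderiv w hw)
  have hsc : IsComplete (Ici (5 / 2 : ℝ)) := isClosed_Ici.isComplete
  refine ⟨fun w hw ↦ hmaps hw, fun w hw ↦ ⟨hderiv w hw, by norm_num⟩, ?_,
    fun x hx hfx u hu₀ hu ↦ hlip.tendsto_of_isFixedPt hK hsc hmaps hx hfx hu₀ hu⟩
  obtain ⟨x, hx, hfx⟩ := hlip.exists_isFixedPt hK hsc hmaps nonempty_Ici
  exact ⟨x, ⟨hx, hfx⟩, fun y ⟨hy, hfy⟩ ↦ hlip.eq_of_isFixedPt hK hy hx hfy hfx⟩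
end

section
/- Consider the scalar ODE ż(t) = −P(z(t)) + y(t) with P(z) = 2z³ − 9z² + 12z, where y : [0,T] → ℝ is continuous with |y(t)| ≤ M for all t, and assume M ≥ 35/4. Let z̃ > 5/2 be the unique point with P(z̃) = M. If z : [0,T] → ℝ is a solution with z(0) ≤ z̃, then z(t) ≤ z̃ for all t ∈ [0,T]. -/
theorem stmt_15 (P : ℝ → ℝ) (hP : ∀ z, P z = 2*z^3 - 9*z^2 + 12*z)
    (T M : ℝ) (hT : 0 ≤ T) (hM : 35/4 ≤ M)
    (y : ℝ → ℝ) (hycont : ContinuousOn y (Set.Icc 0 T))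
    (hybound : ∀ t ∈ Set.Icc (0:ℝ) T, |y t| ≤ M)
    (zt : ℝ) (hzt : 5/2 < zt) (hPzt : P zt = M)
    (z : ℝ → ℝ)
    (hz : ∀ t ∈ Set.Icc (0:ℝ) T, HasDerivAt z (-(P (z t)) + y t) t)
    (hz0 : z 0 ≤ zt) :
    ∀ t ∈ Set.Icc (0:ℝ) T, z t ≤ zt := by
  -- monotonicity of P above zt
  have hmono : ∀ w, zt ≤ w → M ≤ P w := by
    intro w hw
    rw [← hPzt, hP, hP]
    have hfac : 0 ≤ 2*w^2 + 2*w*zt + 2*zt^2 - 9*w - 9*zt + 12 := by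
      nlinarith [mul_pos (by linarith : (0:ℝ) < zt - 2) (by linarith : (0:ℝ) < w - 2),
        sq_nonneg (w - zt), sq_nonneg (zt - 5/2)]
    nlinarith [mul_nonneg (sub_nonneg.2 hw) hfac]
  have hzcont : ContinuousOn z (Set.Icc 0 T) := fun x hx =>
    ((hz x hx).continuousAt).continuousWithinAt
  -- main estimate with barrier zt + r*x
  have key : ∀ r > (0:ℝ), ∀ t ∈ Set.Icc (0:ℝ) T, z t ≤ zt + r * t := by
    intro r hr
    have := image_le_of_deriv_right_lt_deriv_boundary (f := z)
      (f' := fun t => -(P (z t)) + y t) (a := 0) (b := T)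
      hzcont (fun x hx => ((hz x (Set.mem_Icc_of_Ico hx)).hasDerivWithinAt))
      (B := fun x => zt + r * x) (B' := fun _ => r)
      (by simpa using hz0)
      (fun x => by simpa using ((hasDerivAt_id x).const_mul r).const_add zt)
      ?_
    · exact fun t ht => this ht
    · intro x hx hEq
      have hEq' : z x = zt + r * x := hEq
      have hx' : x ∈ Set.Icc (0:ℝ) T := Set.mem_Icc_of_Ico hx
      have hzx : zt ≤ z x := by
        rw [hEq']; nlinarith [hx.1, hr.le]
      have h1 : M ≤ P (z x) := hmono _ hzx
      have h2 : y x ≤ M := (abs_le.1 (hybound x hx')).2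
      show -(P (z x)) + y x < r
      linarith
  intro t ht
  by_contra hlt
  push_neg at hlt
  have hrpos : (0:ℝ) < (z t - zt) / (T + 1) := by
    apply div_pos (by linarith) (by linarith)
  have := key _ hrpos t ht
  have htT : t ≤ T := ht.2
  have h0t : 0 ≤ t := ht.1
  have h2 : z t ≤ zt + (z t - zt) / (T + 1) * T := by
    nlinarith [mul_le_mul_of_nonneg_left htT (le_of_lt hrpos)]
  have hT1 : (0:ℝ) < T + 1 := by linarith
  have h3 : (z t - zt) / (T + 1) * T < z t - zt := by
    rw [div_mul_eq_mul_div, div_lt_iff₀ hT1]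
    nlinarith
  linarith
end
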